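/- Let p_k(A) be the nonbacktracking walk count matrices, with p_0(A) = I. Then p_1(A) = A, p_2(A) = A² − D, and for every k ≥ 2 the four-term recurrence p_{k+1}(A) = p_k(A)·A + p_{k−1}(A)·(I − D) − p_{k−2}(A)·(A − S) holds. -/

import Mathlib

open Matrix Finset

open scoped Classical in
/-- Nonbacktracking walk count matrix: entry `(i,j)` is the number of walks of length `k`
from `i` to `j` that never satisfy `i_s = i_{s+2}`. -/
noncomputable def nbtwCount {n : ℕ} (A : Matrix (Fin n) (Fin n) ℝ) (k : ℕ) :
    Matrix (Fin n) (Fin n) ℝ :=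
  Matrix.of fun i j =>
    ∑ w : Fin (k + 1) → Fin n,
      (let w' : ℕ → Fin n := fun s => w ⟨s % (k + 1), Nat.mod_lt s (Nat.succ_pos k)⟩
       if w' 0 = i ∧ w' k = j ∧ (∀ s ∈ Finset.range k, A (w' s) (w' (s + 1)) = 1) ∧
          (∀ s ∈ Finset.range (k - 1), w' s ≠ w' (s + 2))
       then 1
       else 0)

/-- Diagonal matrix `D` with `d_{ii} = (A²)_{ii}`. -/
noncomputable def degDiag {n : ℕ} (A : Matrix (Fin n) (Fin n) ℝ) : Matrix (Fin n) (Fin n) ℝ :=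
  Matrix.diagonal fun i => (A * A) i i

/-- Matrix `S` with `s_{ij} = a_{ij} a_{ji}`. -/
noncomputable def recipMat {n : ℕ} (A : Matrix (Fin n) (Fin n) ℝ) : Matrix (Fin n) (Fin n) ℝ :=
  Matrix.of fun i j => A i j * A j i

/-! Group the nonbacktracking walks of length `k + 1` from `i` to `j` by their last step `m → j`,
and let `t_k(i, m, j)` be their number, so that `p_{k+1}(i, j) = ∑ₘ t_k(i, m, j)`. Deleting the last
step identifies such walks with the walks from `i` to `m` that did not arrive at `m` from `j`, hence
`t_{k+1}(i, m, j) = a_{mj} (p_{k+1}(i, m) - t_k(i, j, m))`. Applied twice, this expresses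
`t_{k+2}(i, m, j)` through `p_{k+2}`, `p_{k+1}` and `t_k(i, m, j)`, where `a_{jm} t_k(i, m, j)` is
rewritten using that `t_k(i, m, j) = a_{mj} p_k(i, m)` when `a_{jm} = 0`: a walk cannot step from
`j` to `m` without that edge. Summing over `m` gives the recurrence. -/

namespace NonBacktracking

section Walks

variable {V : Type*} (A : Matrix V V ℝ)

def IsNBWalk (k : ℕ) (i j : V) (w : ℕ → V) : Prop :=
  w 0 = i ∧ w k = j ∧ (∀ s < k, A (w s) (w (s + 1)) = 1) ∧ ∀ s, s + 2 ≤ k → w s ≠ w (s + 2)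

variable {A}

lemma isNBWalk_congr {k : ℕ} {i j : V} {w w' : ℕ → V} (h : ∀ s ≤ k, w s = w' s) :
    IsNBWalk A k i j w ↔ IsNBWalk A k i j w' := by
  simp only [IsNBWalk, h 0 k.zero_le, h k le_rfl]
  refine and_congr_right' (and_congr_right' (and_congr ?_ ?_))
  · refine forall₂_congr fun s hs => ?_
    rw [h s (by omega), h (s + 1) (by omega)]
  · refine forall₂_congr fun s hs => ?_
    rw [h s (by omega), h (s + 2) (by omega)]

lemma isNBWalk_zero_iff {i j : V} {w : ℕ → V} : IsNBWalk A 0 i j w ↔ w 0 = i ∧ w 0 = j := by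
  simp [IsNBWalk]

lemma isNBWalk_succ_iff {k : ℕ} {i j : V} {w : ℕ → V} :
    IsNBWalk A (k + 1) i j w ↔
      w (k + 1) = j ∧ IsNBWalk A k i (w k) w ∧ A (w k) j = 1 ∧ ∀ s, s + 1 = k → w s ≠ j := by
  constructor
  · rintro ⟨h0, hj, hadj, hnb⟩
    refine ⟨hj, ⟨h0, rfl, fun s hs => hadj s (by omega), fun s hs => hnb s (by omega)⟩,
      hj ▸ hadj k k.lt_succ_self, fun s hs => ?_⟩
    rw [← hj, ← hs]
    exact hnb s (by omega)
  · rintro ⟨hj, ⟨h0, -, hadj, hnb⟩, hlast, hback⟩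
    refine ⟨h0, hj, fun s hs => ?_, fun s hs => ?_⟩
    · obtain hs | rfl := Nat.lt_succ_iff_lt_or_eq.mp hs
      · exact hadj s hs
      · rwa [hj]
    · obtain hs | hs := Nat.lt_succ_iff_lt_or_eq.mp hs
      · exact hnb s (by omega)
      · rw [show s + 2 = k + 1 by omega, hj]
        exact hback s (by omega)

def natExt {k : ℕ} (w : Fin (k + 1) → V) : ℕ → V :=
  fun s => w ⟨s % (k + 1), Nat.mod_lt s k.succ_pos⟩

lemma natExt_of_lt {k s : ℕ} (w : Fin (k + 1) → V) (h : s < k + 1) : natExt w s = w ⟨s, h⟩ := by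
  simp only [natExt, Nat.mod_eq_of_lt h]

lemma natExt_snoc_of_le {k s : ℕ} (v : Fin (k + 1) → V) (x : V) (hs : s ≤ k) :
    natExt (Fin.snoc v x : Fin (k + 2) → V) s = natExt v s := by
  rw [natExt_of_lt _ (by omega), natExt_of_lt _ (by omega)]
  exact Fin.snoc_castSucc (α := fun _ => V) x v ⟨s, by omega⟩

lemma natExt_snoc_last {k : ℕ} (v : Fin (k + 1) → V) (x : V) :
    natExt (Fin.snoc v x : Fin (k + 2) → V) (k + 1) = x := by
  rw [natExt_of_lt _ (by omega)]
  exact Fin.snoc_last (α := fun _ => V) x v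

lemma isNBWalk_natExt_snoc_iff {k : ℕ} {i j : V} (v : Fin (k + 1) → V) (x : V) :
    IsNBWalk A (k + 1) i j (natExt (Fin.snoc v x : Fin (k + 2) → V)) ↔
      x = j ∧ IsNBWalk A k i (natExt v k) (natExt v) ∧ A (natExt v k) j = 1 ∧
        ∀ s, s + 1 = k → natExt v s ≠ j := by
  have hpre : ∀ s ≤ k, natExt (Fin.snoc v x : Fin (k + 2) → V) s = natExt v s :=
    fun s hs => natExt_snoc_of_le v x hs
  rw [isNBWalk_succ_iff, natExt_snoc_last, hpre k le_rfl, isNBWalk_congr hpre]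
  refine and_congr_right' (and_congr_right' (and_congr_right' (forall₂_congr fun s hs => ?_)))
  rw [hpre s (by omega)]

end Walks

section Counts

open scoped Classical

variable {V : Type*} [Fintype V] (A : Matrix V V ℝ)

noncomputable def nbWalkCount (k : ℕ) (i j : V) : ℝ :=
  ∑ w : Fin (k + 1) → V, if IsNBWalk A k i j (natExt w) then 1 else 0

/-- The number of nonbacktracking walks of length `k + 1` from `i` to `j` whose last step is
`m → j`. -/
noncomputable def nbWalkCountLast (k : ℕ) (i m j : V) : ℝ :=
  ∑ w : Fin (k + 2) → V, if IsNBWalk A (k + 1) i j (natExt w) ∧ natExt w k = m then 1 else 0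

lemma sum_fin_succ_pi {M : Type*} [AddCommMonoid M] {k : ℕ} (f : (Fin (k + 2) → V) → M) :
    ∑ w : Fin (k + 2) → V, f w = ∑ v : Fin (k + 1) → V, ∑ x : V, f (Fin.snoc v x) := by
  rw [← (Fin.snocEquiv fun _ => V).sum_comp, Fintype.sum_prod_type_right]
  rfl

lemma nbWalkCount_zero [DecidableEq V] (i j : V) :
    nbWalkCount A 0 i j = (1 : Matrix V V ℝ) i j := by
  rw [nbWalkCount, ← (Equiv.funUnique (Fin 1) V).symm.sum_comp, one_apply]
  by_cases h : i = j
  · subst h; simp [isNBWalk_zero_iff, natExt_of_lt]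
  · simp [isNBWalk_zero_iff, natExt_of_lt, h]

lemma nbWalkCount_succ (k : ℕ) (i j : V) :
    nbWalkCount A (k + 1) i j = ∑ m, nbWalkCountLast A k i m j := by
  simp only [nbWalkCount, nbWalkCountLast, ite_and]
  rw [Finset.sum_comm]
  simp

lemma nbWalkCountLast_eq_sum (k : ℕ) (i m j : V) :
    nbWalkCountLast A k i m j = ∑ v : Fin (k + 1) → V,
      if IsNBWalk A k i m (natExt v) ∧ A m j = 1 ∧ ∀ s, s + 1 = k → natExt v s ≠ j
      then 1 else 0 := by
  rw [nbWalkCountLast, sum_fin_succ_pi]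
  refine Finset.sum_congr rfl fun v _ => ?_
  simp only [isNBWalk_natExt_snoc_iff, natExt_snoc_of_le v _ le_rfl, and_assoc, ite_and]
  rw [Finset.sum_ite_eq', if_pos (mem_univ _)]
  by_cases hm : natExt v k = m
  · subst hm
    simp
  · have hw : ¬IsNBWalk A k i m (natExt v) := fun hw => hm hw.2.1
    simp [hm, hw]

lemma nbWalkCountLast_eq_mul (hA : ∀ i j, A i j = 0 ∨ A i j = 1) (k : ℕ) (i m j : V) :
    nbWalkCountLast A k i m j = A m j * ∑ v : Fin (k + 1) → V,
      if IsNBWalk A k i m (natExt v) ∧ ∀ s, s + 1 = k → natExt v s ≠ j then 1 else 0 := by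
  rw [nbWalkCountLast_eq_sum, mul_sum]
  rcases hA m j with h | h <;> simp [h]

lemma mul_nbWalkCountLast_self (hA : ∀ i j, A i j = 0 ∨ A i j = 1) (k : ℕ) (i m j : V) :
    A m j * nbWalkCountLast A k i m j = nbWalkCountLast A k i m j := by
  rw [nbWalkCountLast_eq_mul A hA, ← mul_assoc]
  rcases hA m j with h | h <;> simp [h]

lemma nbWalkCountLast_zero (hA : ∀ i j, A i j = 0 ∨ A i j = 1) (i m j : V) :
    nbWalkCountLast A 0 i m j = A m j * nbWalkCount A 0 i m := by
  simp [nbWalkCountLast_eq_mul A hA, nbWalkCount]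

lemma nbWalkCountLast_succ (hA : ∀ i j, A i j = 0 ∨ A i j = 1) (k : ℕ) (i m j : V) :
    nbWalkCountLast A (k + 1) i m j =
      A m j * (nbWalkCount A (k + 1) i m - nbWalkCountLast A k i j m) := by
  rw [nbWalkCountLast_eq_mul A hA, nbWalkCount, nbWalkCountLast, ← sum_sub_distrib]
  congr 1
  refine Finset.sum_congr rfl fun v _ => ?_
  by_cases hw : IsNBWalk A (k + 1) i m (natExt v) <;> by_cases hj : natExt v k = j <;> simp [hw, hj]

lemma nbWalkCountLast_of_adj_eq_zero (hA : ∀ i j, A i j = 0 ∨ A i j = 1) {k : ℕ} {i m j : V}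
    (h : A j m = 0) : nbWalkCountLast A k i m j = A m j * nbWalkCount A k i m := by
  cases k with
  | zero => exact nbWalkCountLast_zero A hA i m j
  | succ k => rw [nbWalkCountLast_succ A hA, ← mul_nbWalkCountLast_self A hA k i j m, h, zero_mul,
      sub_zero]

lemma nbWalkCountLast_add_two (hA : ∀ i j, A i j = 0 ∨ A i j = 1) (k : ℕ) (i m j : V) :
    nbWalkCountLast A (k + 2) i m j =
      nbWalkCount A (k + 2) i m * A m j - nbWalkCount A (k + 1) i j * (A j m * A m j) +
        nbWalkCountLast A k i m j - nbWalkCount A k i m * (A m j - A m j * A j m) := by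
  rw [nbWalkCountLast_succ A hA, nbWalkCountLast_succ A hA]
  rcases hA j m with h | h
  · rw [nbWalkCountLast_of_adj_eq_zero A hA h, h]
    ring
  · rw [h]
    linear_combination mul_nbWalkCountLast_self A hA k i m j

lemma nbWalkCount_one (hA : ∀ i j, A i j = 0 ∨ A i j = 1) (i j : V) :
    nbWalkCount A 1 i j = A i j := by
  simp [nbWalkCount_succ, nbWalkCountLast_zero A hA, nbWalkCount_zero, one_apply]

lemma nbWalkCount_two [DecidableEq V] (hA : ∀ i j, A i j = 0 ∨ A i j = 1) (i j : V) :
    nbWalkCount A 2 i j = (A * A) i j - diagonal (fun i => (A * A) i i) i j := by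
  simp only [nbWalkCount_succ, nbWalkCountLast_succ A hA, nbWalkCountLast_zero A hA,
    nbWalkCount_zero, mul_apply, diagonal_apply, one_apply]
  split_ifs with h
  · subst h
    simp
  · simp [mul_comm]

lemma nbWalkCount_add_three (hA : ∀ i j, A i j = 0 ∨ A i j = 1) (k : ℕ) (i j : V) :
    nbWalkCount A (k + 3) i j =
      ∑ m, nbWalkCount A (k + 2) i m * A m j + nbWalkCount A (k + 1) i j * (1 - (A * A) j j) -
        ∑ m, nbWalkCount A k i m * (A m j - A m j * A j m) := by
  rw [nbWalkCount_succ, sum_congr rfl fun m _ => nbWalkCountLast_add_two A hA k i m j,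
    sum_sub_distrib, sum_add_distrib, sum_sub_distrib, ← mul_sum, ← nbWalkCount_succ, mul_apply]
  ring

end Counts

end NonBacktracking

open NonBacktracking

lemma nbtwCount_apply {n : ℕ} (A : Matrix (Fin n) (Fin n) ℝ) (k : ℕ) (i j : Fin n) :
    nbtwCount A k i j = nbWalkCount A k i j := by
  refine Finset.sum_congr rfl fun w _ => ?_
  convert if_congr ?_ rfl rfl using 0
  simp only [IsNBWalk, mem_range]
  exact and_congr_right' (and_congr_right' (and_congr_right'
    (forall_congr' fun s => by constructor <;> intro h hs <;> exact h (by omega))))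

theorem nbtw_recurrence_general {n : ℕ} (A : Matrix (Fin n) (Fin n) ℝ)
    (hA01 : ∀ i j, A i j = 0 ∨ A i j = 1) :
    nbtwCount A 0 = 1 ∧
    nbtwCount A 1 = A ∧
    nbtwCount A 2 = A * A - degDiag A ∧
    ∀ k, 2 ≤ k →
      nbtwCount A (k + 1) =
        nbtwCount A k * A + nbtwCount A (k - 1) * (1 - degDiag A) -
          nbtwCount A (k - 2) * (A - recipMat A) := by
  refine ⟨?_, ?_, ?_, fun k hk => ?_⟩
  · ext i j
    rw [nbtwCount_apply, nbWalkCount_zero]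
  · ext i j
    rw [nbtwCount_apply, nbWalkCount_one A hA01]
  · ext i j
    rw [nbtwCount_apply, nbWalkCount_two A hA01]
    rfl
  · obtain ⟨k, rfl⟩ := Nat.exists_eq_add_of_le' hk
    ext i j
    rw [show k + 2 + 1 = k + 3 from rfl, show k + 2 - 1 = k + 1 from rfl, Nat.add_sub_cancel,
      degDiag, recipMat, ← diagonal_one, diagonal_sub]
    simp only [Matrix.sub_apply, Matrix.add_apply, mul_diagonal]
    simp only [mul_apply, Matrix.sub_apply, of_apply, nbtwCount_apply,
      nbWalkCount_add_three A hA01]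

/-- The four-term recurrence for nonbacktracking walk counts. -/
theorem nbtw_recurrence {n : ℕ} (hn : 1 ≤ n) (A : Matrix (Fin n) (Fin n) ℝ)
    (hA01 : ∀ i j, A i j = 0 ∨ A i j = 1) (hAdiag : ∀ i, A i i = 0) :
    nbtwCount A 0 = 1 ∧
    nbtwCount A 1 = A ∧
    nbtwCount A 2 = A * A - degDiag A ∧
    ∀ k, 2 ≤ k →
      nbtwCount A (k + 1) =
        nbtwCount A k * A + nbtwCount A (k - 1) * (1 - degDiag A) -
          nbtwCount A (k - 2) * (A - recipMat A) :=
  nbtw_recurrence_general A hA01
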